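/- Let μ, β, ν, θ, k, γ > 0 and δ ∈ [0,1), set R₀ = β/(ν+μ), p_c = 1 − 1/R₀, γ_c = p_c(p_c − δ), and assume γ_c < γ < 1 − δ. Let S, I, p : [0,∞) → ℝ be differentiable functions satisfying, for all τ ≥ 0, S′(τ) = μ(1−p(τ)) − μS(τ) − βS(τ)I(τ), I′(τ) = βS(τ)I(τ) − (ν+μ)I(τ), p′(τ) = k(p(τ)(1−p(τ))(δ + θβS(τ)I(τ) − p(τ)) + γ(1−p(τ))), together with S(τ) ≥ 0, I(τ) ≥ 0 and p(τ) ∈ [0,1] for all τ ≥ 0. Then liminf of p(τ) as τ → ∞ is at least p⁰ = (δ + √(δ² + 4γ))/2, and I(τ) → 0 as τ → ∞. -/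

import Mathlib

open Filter Set Topology Real

/-!
Whenever `p ≤ q < p⁰`, the vaccination equation gives `p' ≥ c(q) > 0`, because
`γ + δp - p² = (p⁰ - p)(p + p⁰ - δ)` and the imitation term `θβSIp` is nonnegative;
as `p ≤ 1`, `p` crosses every level `q < p⁰` in finite time and never drops below it again,
so `liminf p ≥ p⁰`. Once `p ≥ 1 - L` with `1 - p⁰ < L`, the `S`-equation gives
`S' ≤ μ(L - S)`, so by Grönwall `S` eventually stays below any `s > L`. Since `p⁰ > p_c`,
one can take `βs < ν + μ`, and then `I' ≤ -(ν + μ - βs) I` forces `I → 0`.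
-/

section Comparison

variable {f f' : ℝ → ℝ}

lemma const_le_image_of_deriv_pos_of_eq {q a b : ℝ}
    (hf : ∀ t ∈ Icc a b, HasDerivAt f (f' t) t) (hf' : ∀ t ∈ Ico a b, f t = q → 0 < f' t)
    (ha : q ≤ f a) : ∀ t ∈ Icc a b, q ≤ f t := by
  intro t ht
  have := image_le_of_deriv_right_lt_deriv_boundary' (f := fun t => -f t) (f' := fun t => -f' t)
    (B := fun _ => -q) (B' := 0)
    (fun t ht => (hf t ht).continuousAt.neg.continuousWithinAt)
    (fun t ht => (hf t (Ico_subset_Icc_self ht)).neg.hasDerivWithinAt)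
    (neg_le_neg ha) continuousOn_const (fun t _ => hasDerivWithinAt_const _ _ _)
    (fun t ht h => by simpa using hf' t ht (neg_inj.1 h)) ht
  simpa using this

lemma add_mul_sub_le_image_of_le_deriv {c a b : ℝ}
    (hf : ∀ t ∈ Icc a b, HasDerivAt f (f' t) t) (hf' : ∀ t ∈ Ico a b, c ≤ f' t) :
    ∀ t ∈ Icc a b, f a + c * (t - a) ≤ f t :=
  image_le_of_deriv_right_le_deriv_boundary (by fun_prop)
    (fun t _ => ((hasDerivAt_id t).sub_const a |>.const_mul c |>.const_add (f a)).hasDerivWithinAt)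
    (by simp) (fun t ht => (hf t ht).continuousAt.continuousWithinAt)
    (fun t ht => (hf t (Ico_subset_Icc_self ht)).hasDerivWithinAt) (by simpa using hf')

lemma eventually_ge_of_deriv_ge_of_bddAbove {q c M : ℝ} (hc : 0 < c)
    (hf : ∀ᶠ t in atTop, HasDerivAt f (f' t) t) (hM : ∀ᶠ t in atTop, f t ≤ M)
    (hf' : ∀ᶠ t in atTop, f t ≤ q → c ≤ f' t) : ∀ᶠ t in atTop, q ≤ f t := by
  obtain ⟨a, ha⟩ := eventually_atTop.1 (hf.and (hM.and hf'))
  obtain ⟨T, hTa, hqT⟩ : ∃ T ≥ a, q ≤ f T := by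
    by_contra! hlt
    have hgap : 0 < M - f a + 1 := by linarith [(ha a le_rfl).2.1]
    set T := a + (M - f a + 1) / c
    have hTa : a ≤ T := le_add_of_nonneg_right (by positivity)
    have hgrowth := add_mul_sub_le_image_of_le_deriv (fun t ht => (ha t ht.1).1)
      (fun t ht => (ha t ht.1).2.2 (hlt t ht.1).le) T ⟨hTa, le_rfl⟩
    have hcT : c * (T - a) = M - f a + 1 := by simp only [T]; field_simp; ring
    linarith [(ha T hTa).2.1]
  refine eventually_atTop.2 ⟨T, fun t ht => ?_⟩
  exact const_le_image_of_deriv_pos_of_eq (fun s hs => (ha s (hTa.trans hs.1)).1)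
    (fun s hs hsq => hc.trans_le ((ha s (hTa.trans hs.1)).2.2 hsq.le)) hqT t ⟨ht, le_rfl⟩

lemma tendsto_gronwallBound_atTop {δ c L : ℝ} (hc : 0 < c) :
    Tendsto (gronwallBound δ (-c) (c * L)) atTop (𝓝 L) := by
  have hexp : Tendsto (fun x => exp (-c * x)) atTop (𝓝 0) :=
    tendsto_exp_atBot.comp (tendsto_id.const_mul_atTop_of_neg (neg_lt_zero.2 hc))
  rw [gronwallBound_of_K_ne_0 (neg_ne_zero.2 hc.ne')]
  convert (hexp.const_mul δ).add ((hexp.sub_const 1).const_mul (c * L / -c)) using 2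
  field_simp
  ring

lemma eventually_lt_of_deriv_le_mul_sub {c L L' : ℝ} (hc : 0 < c) (hL : L < L')
    (hf : ∀ᶠ t in atTop, HasDerivAt f (f' t) t)
    (hf' : ∀ᶠ t in atTop, f' t ≤ c * (L - f t)) :
    ∀ᶠ t in atTop, f t < L' := by
  obtain ⟨a, ha⟩ := eventually_atTop.1 (hf.and hf')
  have hbound : ∀ t ≥ a, f t ≤ gronwallBound (f a) (-c) (c * L) (t - a) := fun t ht =>
    le_gronwallBound_of_liminf_deriv_right_le
      (fun s hs => (ha s hs.1).1.continuousAt.continuousWithinAt)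
      (fun s hs _ hr => (ha s hs.1).1.hasDerivWithinAt.liminf_right_slope_le hr) le_rfl
      (fun s hs => by linarith [(ha s hs.1).2]) t ⟨ht, le_rfl⟩
  have hlim := (tendsto_gronwallBound_atTop (δ := f a) (L := L) hc).comp
    (tendsto_atTop_add_const_right atTop (-a) tendsto_id)
  filter_upwards [hlim.eventually_lt_const hL, eventually_ge_atTop a] with t ht hta
  exact (hbound t hta).trans_lt (by simpa [sub_eq_add_neg] using ht)

lemma tendsto_zero_of_deriv_le_neg_mul {c : ℝ} (hc : 0 < c)
    (hf : ∀ᶠ t in atTop, HasDerivAt f (f' t) t) (hf' : ∀ᶠ t in atTop, f' t ≤ -c * f t)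
    (hf0 : ∀ᶠ t in atTop, 0 ≤ f t) : Tendsto f atTop (𝓝 0) :=
  tendsto_order.2 ⟨fun _ hε => hf0.mono fun _ h => hε.trans_le h, fun _ hε =>
    eventually_lt_of_deriv_le_mul_sub hc hε hf (hf'.mono fun t h => by linarith)⟩

end Comparison

/-- The vaccination level `p⁰` of the disease-free equilibrium. -/
noncomputable def posRoot (δ γ : ℝ) : ℝ := (δ + √(δ ^ 2 + 4 * γ)) / 2

section posRoot

variable {δ γ x : ℝ}

lemma posRoot_sq (hγ : 0 ≤ γ) : posRoot δ γ ^ 2 = δ * posRoot δ γ + γ := by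
  have := sq_sqrt (show 0 ≤ δ ^ 2 + 4 * γ by positivity)
  unfold posRoot
  linear_combination this / 4

lemma lt_posRoot_of_mul_sub_lt (hγ : 0 ≤ γ) (h : x * (x - δ) < γ) : x < posRoot δ γ := by
  by_contra! hx
  have hsqrt : 0 ≤ 2 * posRoot δ γ - δ := by
    unfold posRoot; linarith [sqrt_nonneg (δ ^ 2 + 4 * γ)]
  nlinarith [posRoot_sq (δ := δ) hγ, mul_nonneg (sub_nonneg.2 hx) hsqrt]

lemma posRoot_lt_of_lt_mul_sub (hγ : 0 ≤ γ) (hx : δ ≤ 2 * x) (h : γ < x * (x - δ)) :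
    posRoot δ γ < x := by
  by_contra! hx'
  have hsum : 0 ≤ posRoot δ γ + x - δ := by linarith
  nlinarith [posRoot_sq (δ := δ) hγ, mul_nonneg (sub_nonneg.2 hx') hsum]

end posRoot

lemma le_vaccination_rate {δ γ k r q p x : ℝ} (hr : r ^ 2 = δ * r + γ) (hδr : δ ≤ r)
    (hk : 0 ≤ k) (hqr : q ≤ r) (hq1 : q ≤ 1) (hp : 0 ≤ p) (hpq : p ≤ q) (hx : 0 ≤ x) :
    k * ((1 - q) * ((r - δ) * (r - q))) ≤ k * (p * (1 - p) * (δ + x - p) + γ * (1 - p)) := by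
  have hgap : (r - δ) * (r - q) ≤ (p + r - δ) * (r - p) :=
    mul_le_mul (by linarith) (by linarith) (by linarith) (by linarith)
  calc k * ((1 - q) * ((r - δ) * (r - q)))
      ≤ k * ((1 - p) * ((p + r - δ) * (r - p) + p * x)) := by
        gcongr
        · linarith
        · linarith [mul_nonneg hp hx]
    _ = k * (p * (1 - p) * (δ + x - p) + γ * (1 - p)) := by
        linear_combination k * (1 - p) * hr

theorem disease_free_global_attractivity_general (μ β ν θ k γ δ : ℝ)
    (hμ : 0 < μ) (hβ : 0 < β) (hθ : 0 < θ) (hk : 0 < k)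
    (hγ : 0 < γ)
    (hγlow : (1 - (ν + μ) / β) * ((1 - (ν + μ) / β) - δ) < γ)
    (hγhigh : γ < 1 - δ)
    (S I p : ℝ → ℝ)
    (hS : ∀ τ : ℝ, 0 ≤ τ →
      HasDerivAt S (μ * (1 - p τ) - μ * S τ - β * S τ * I τ) τ)
    (hI : ∀ τ : ℝ, 0 ≤ τ →
      HasDerivAt I (β * S τ * I τ - (ν + μ) * I τ) τ)
    (hp : ∀ τ : ℝ, 0 ≤ τ →
      HasDerivAt p
        (k * (p τ * (1 - p τ) * (δ + θ * (β * S τ * I τ) - p τ)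
          + γ * (1 - p τ))) τ)
    (hSnn : ∀ τ : ℝ, 0 ≤ τ → 0 ≤ S τ)
    (hInn : ∀ τ : ℝ, 0 ≤ τ → 0 ≤ I τ)
    (hpmem : ∀ τ : ℝ, 0 ≤ τ → p τ ∈ Set.Icc (0 : ℝ) 1) :
    (δ + Real.sqrt (δ ^ 2 + 4 * γ)) / 2 ≤ liminf p atTop ∧
    Tendsto I atTop (nhds 0) := by
  show posRoot δ γ ≤ _ ∧ _
  set r := posRoot δ γ
  have hr : r ^ 2 = δ * r + γ := posRoot_sq hγ.le
  have hδr : δ < r := lt_posRoot_of_mul_sub_lt hγ.le (by simpa using hγ)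
  have hr1 : r < 1 := posRoot_lt_of_lt_mul_sub hγ.le (by linarith) (by linarith)
  have hpc : 1 - r < (ν + μ) / β := by linarith [lt_posRoot_of_mul_sub_lt hγ.le hγlow]
  have hpos := eventually_ge_atTop (0 : ℝ)
  have hp_ge : ∀ᶠ t in atTop, 0 ≤ p t := hpos.mono fun t ht => (hpmem t ht).1
  have hp_le : ∀ᶠ t in atTop, p t ≤ 1 := hpos.mono fun t ht => (hpmem t ht).2
  have hp_ev : ∀ q < r, ∀ᶠ t in atTop, q ≤ p t := fun q hq =>
    eventually_ge_of_deriv_ge_of_bddAbove (M := 1)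
      (c := k * ((1 - q) * ((r - δ) * (r - q))))
      (mul_pos hk (mul_pos (by linarith) (mul_pos (by linarith) (by linarith))))
      (hpos.mono hp) hp_le
      (hpos.mono fun t ht hpq => le_vaccination_rate hr hδr.le hk.le hq.le (by linarith)
        (hpmem t ht).1 hpq (by have := hSnn t ht; have := hInn t ht; positivity))
  refine ⟨(le_liminf_iff' (isBoundedUnder_of_eventually_le hp_le).isCoboundedUnder_ge
    (isBoundedUnder_of_eventually_ge hp_ge)).2 hp_ev, ?_⟩
  obtain ⟨s, h1s, hsβ⟩ := exists_between hpc
  obtain ⟨L, h1L, hLs⟩ := exists_between h1s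
  have hS_deriv :
      ∀ᶠ t in atTop, μ * (1 - p t) - μ * S t - β * S t * I t ≤ μ * (L - S t) := by
    filter_upwards [hpos, hp_ev (1 - L) (by linarith)] with t ht hpt
    nlinarith [mul_nonneg (mul_nonneg hβ.le (hSnn t ht)) (hInn t ht)]
  have hS_ev := eventually_lt_of_deriv_le_mul_sub hμ hLs (hpos.mono hS) hS_deriv
  have hβs : β * s < ν + μ := by linarith [(lt_div_iff₀ hβ).1 hsβ]
  refine tendsto_zero_of_deriv_le_neg_mul (c := ν + μ - β * s) (by linarith) (hpos.mono hI) ?_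
    (hpos.mono hInn)
  filter_upwards [hpos, hS_ev] with t ht hSt
  nlinarith [mul_le_mul_of_nonneg_right (mul_le_mul_of_nonneg_left hSt.le hβ.le) (hInn t ht)]

/-- Global attractivity of the disease-free equilibrium `E⁰` of the SIR
model with evolutionary vaccination game: if `γ_c < γ < 1 − δ`, then along
every solution `liminf p ≥ p⁰ = (δ + √(δ² + 4γ))/2` and `I(τ) → 0`. -/
theorem disease_free_global_attractivity (μ β ν θ k γ δ : ℝ)
    (hμ : 0 < μ) (hβ : 0 < β) (hν : 0 < ν) (hθ : 0 < θ) (hk : 0 < k)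
    (hγ : 0 < γ) (hδ : δ ∈ Set.Ico (0 : ℝ) 1)
    (hγlow : (1 - (ν + μ) / β) * ((1 - (ν + μ) / β) - δ) < γ)
    (hγhigh : γ < 1 - δ)
    (S I p : ℝ → ℝ)
    (hS : ∀ τ : ℝ, 0 ≤ τ →
      HasDerivAt S (μ * (1 - p τ) - μ * S τ - β * S τ * I τ) τ)
    (hI : ∀ τ : ℝ, 0 ≤ τ →
      HasDerivAt I (β * S τ * I τ - (ν + μ) * I τ) τ)
    (hp : ∀ τ : ℝ, 0 ≤ τ →
      HasDerivAt p
        (k * (p τ * (1 - p τ) * (δ + θ * (β * S τ * I τ) - p τ)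
          + γ * (1 - p τ))) τ)
    (hSnn : ∀ τ : ℝ, 0 ≤ τ → 0 ≤ S τ)
    (hInn : ∀ τ : ℝ, 0 ≤ τ → 0 ≤ I τ)
    (hpmem : ∀ τ : ℝ, 0 ≤ τ → p τ ∈ Set.Icc (0 : ℝ) 1) :
    (δ + Real.sqrt (δ ^ 2 + 4 * γ)) / 2 ≤ liminf p atTop ∧
    Tendsto I atTop (nhds 0) :=
  disease_free_global_attractivity_general μ β ν θ k γ δ hμ hβ hθ hk hγ hγlow hγhigh S I p hS hI hp
    hSnn hInn hpmem
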